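/- arXiv:1707.02839 — 3 statements merged into one kernel-verified Lean document; each statement's English description precedes it below -/
import Mathlib

section
/- For any square matrix A with Λ(A) ∩ Λ(−A) = ∅ (no assumption of stability) and any 0 ≤ t_s < t_e < ∞, the matrix P_T = ∫_{t_s}^{t_e} exp(At) B Bᵀ exp(Aᵀt) dt is the unique solution of A X + X Aᵀ = −exp(A t_s) B Bᵀ exp(Aᵀ t_s) + exp(A t_e) B Bᵀ exp(Aᵀ t_e). -/
/-!
The derivative of `F t = exp (t A) C exp (t Aᵀ)` is `A F t + F t Aᵀ`, so by the fundamental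
theorem of calculus the Gramian over `[ts, te]` solves the Lyapunov equation, for any interval.
Uniqueness is Sylvester's theorem: `A X + X Aᵀ = 0` means `A X = X (-Aᵀ)`, hence
`p(A) X = X p(-Aᵀ)` for every polynomial `p`. Taking for `p` the characteristic polynomial of
`-Aᵀ` kills the right-hand side, while by spectral mapping `p(A)` is invertible as soon as no
eigenvalue of `A` is one of `-Aᵀ`, that is of `-A`.
-/

open Matrix MeasureTheory NormedSpace Polynomial
open scoped Matrix

section NormedAlgebra

variable {𝕂 𝔸 : Type*} [RCLike 𝕂] [NormedRing 𝔸] [NormedAlgebra 𝕂 𝔸] [CompleteSpace 𝔸]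

theorem hasDerivAt_exp_smul_mul_mul_exp_smul (A B C : 𝔸) (t : 𝕂) :
    HasDerivAt (fun u : 𝕂 => exp (u • A) * C * exp (u • B))
      (A * (exp (t • A) * C * exp (t • B)) + exp (t • A) * C * exp (t • B) * B) t := by
  refine (((hasDerivAt_exp_smul_const' A t).mul_const C).mul
    (hasDerivAt_exp_smul_const B t)).congr_deriv ?_
  noncomm_ring

end NormedAlgebra

namespace Matrix

variable {m n R : Type*} [Fintype m] [Fintype n]

def sylvesterMap [CommRing R] (A : Matrix m m R) (B : Matrix n n R) :
    Matrix m n R →ₗ[R] Matrix m n R where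
  toFun X := A * X + X * B
  map_add' X Y := by rw [Matrix.mul_add, Matrix.add_mul]; abel
  map_smul' r X := by rw [Matrix.mul_smul, Matrix.smul_mul, RingHom.id_apply, smul_add]

theorem sylvesterMap_apply [CommRing R] (A : Matrix m m R) (B : Matrix n n R)
    (X : Matrix m n R) : sylvesterMap A B X = A * X + X * B := rfl

variable [DecidableEq m] [DecidableEq n]

theorem spectrum_transpose [CommRing R] (A : Matrix n n R) : spectrum R Aᵀ = spectrum R A := by
  ext r
  rw [spectrum.mem_iff, spectrum.mem_iff, ← isUnit_transpose (_ - Aᵀ), transpose_sub,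
    transpose_transpose, algebraMap_eq_diagonal, diagonal_transpose]

theorem aeval_mul_eq_mul_aeval [CommRing R] {A : Matrix m m R} {C : Matrix n n R}
    {X : Matrix m n R} (hX : A * X = X * C) (p : R[X]) :
    aeval A p * X = X * aeval C p := by
  induction p using Polynomial.induction_on with
  | C a => simp [Algebra.algebraMap_eq_smul_one]
  | add p q hp hq => rw [map_add, map_add, Matrix.add_mul, Matrix.mul_add, hp, hq]
  | monomial k a ih =>
    rw [pow_succ, ← mul_assoc, map_mul (aeval A), map_mul (aeval C), aeval_X, aeval_X,
      Matrix.mul_assoc, hX, ← Matrix.mul_assoc, ih, Matrix.mul_assoc]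

theorem eq_zero_of_mul_eq_mul_of_disjoint_spectrum [Field R] [IsAlgClosed R]
    {A : Matrix m m R} {C : Matrix n n R} {X : Matrix m n R} (hX : A * X = X * C)
    (hAC : Disjoint (spectrum R A) (spectrum R C)) : X = 0 := by
  cases isEmpty_or_nonempty n
  · exact Subsingleton.elim _ _
  have hunit : IsUnit (aeval A C.charpoly) := by
    rw [← spectrum.zero_notMem_iff R, spectrum.map_polynomial_aeval_of_degree_pos _ _
      (by rw [charpoly_degree_eq_dim]; exact_mod_cast Fintype.card_pos)]
    rintro ⟨μ, hμA, hμC⟩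
    exact hAC.notMem_of_mem_left hμA (mem_spectrum_iff_isRoot_charpoly.mpr hμC)
  let := hunit.invertible
  apply mul_right_injective_of_invertible (aeval A C.charpoly)
  simp only [aeval_mul_eq_mul_aeval hX, aeval_self_charpoly, Matrix.mul_zero]

theorem eq_zero_of_mul_eq_mul_of_disjoint_spectrum_map {K L : Type*} [Field K] [Field L]
    [IsAlgClosed L] [Algebra K L] {A : Matrix m m K} {C : Matrix n n K} {X : Matrix m n K}
    (hX : A * X = X * C)
    (hAC : Disjoint (spectrum L (A.map (algebraMap K L))) (spectrum L (C.map (algebraMap K L)))) :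
    X = 0 := by
  have hXL : A.map (algebraMap K L) * X.map (algebraMap K L) =
      X.map (algebraMap K L) * C.map (algebraMap K L) := by
    rw [← Matrix.map_mul, ← Matrix.map_mul, hX]
  exact map_injective (algebraMap K L).injective <|
    (eq_zero_of_mul_eq_mul_of_disjoint_spectrum hXL hAC).trans (Matrix.map_zero _ (map_zero _)).symm

theorem sylvesterMap_injective {K L : Type*} [Field K] [Field L] [IsAlgClosed L] [Algebra K L]
    {A : Matrix m m K} {B : Matrix n n K}
    (hAB : Disjoint (spectrum L (A.map (algebraMap K L)))
      (spectrum L ((-B).map (algebraMap K L)))) :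
    Function.Injective (sylvesterMap A B) :=
  (injective_iff_map_eq_zero _).mpr fun _ hX =>
    eq_zero_of_mul_eq_mul_of_disjoint_spectrum_map
      (by rwa [Matrix.mul_neg, eq_neg_iff_add_eq_zero]) hAB

section LinftyOpNorm

attribute [local instance] Matrix.linftyOpNormedRing Matrix.linftyOpNormedAlgebra

/-- The calculus of `exp` needs a normed algebra, so the derivative is computed for the operator
norm; in slope form it only depends on the topology, and so transfers to the entrywise norm. -/
theorem tendsto_slope_exp_smul_mul_mul_exp_smul (A B C : Matrix n n ℝ) (t : ℝ) :
    Filter.Tendsto (slope (fun u : ℝ => exp (u • A) * C * exp (u • B)) t) (nhdsWithin t {t}ᶜ)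
      (nhds (sylvesterMap A B (exp (t • A) * C * exp (t • B)))) :=
  hasDerivAt_iff_tendsto_slope.mp (_root_.hasDerivAt_exp_smul_mul_mul_exp_smul A B C t)

end LinftyOpNorm

end Matrix

attribute [local instance] Matrix.normedAddCommGroup Matrix.normedSpace

section EntrywiseNorm

variable {n : Type*} [Fintype n] [DecidableEq n]

theorem Matrix.hasDerivAt_exp_smul_mul_mul_exp_smul (A B C : Matrix n n ℝ) (t : ℝ) :
    HasDerivAt (fun u : ℝ => exp (u • A) * C * exp (u • B))
      (sylvesterMap A B (exp (t • A) * C * exp (t • B))) t :=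
  hasDerivAt_iff_tendsto_slope.mpr (tendsto_slope_exp_smul_mul_mul_exp_smul A B C t)

theorem Matrix.sylvesterMap_intervalIntegral_exp_smul_mul_mul_exp_smul (A B C : Matrix n n ℝ)
    (a b : ℝ) :
    sylvesterMap A B (∫ t in a..b, exp (t • A) * C * exp (t • B)) =
      exp (b • A) * C * exp (b • B) - exp (a • A) * C * exp (a • B) := by
  have hcont : Continuous fun t : ℝ => exp (t • A) * C * exp (t • B) :=
    continuous_iff_continuousAt.mpr fun t =>
      (hasDerivAt_exp_smul_mul_mul_exp_smul A B C t).continuousAt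
  let S := LinearMap.toContinuousLinearMap (sylvesterMap A B)
  refine (S.intervalIntegral_comp_comm (hcont.intervalIntegrable a b)).symm.trans ?_
  exact intervalIntegral.integral_eq_sub_of_hasDerivAt
    (fun t _ => hasDerivAt_exp_smul_mul_mul_exp_smul A B C t)
    ((S.continuous.comp hcont).intervalIntegrable a b)

end EntrywiseNorm

theorem time_limited_gramian_unique_solution_general {n m : ℕ}
    (A : Matrix (Fin n) (Fin n) ℝ) (B : Matrix (Fin n) (Fin m) ℝ)
    (hA : ∀ μ ∈ spectrum ℂ (A.map (algebraMap ℝ ℂ)),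
            μ ∉ spectrum ℂ ((-A).map (algebraMap ℝ ℂ)))
    (ts te : ℝ) :
    ∀ X : Matrix (Fin n) (Fin n) ℝ,
      A * X + X * Aᵀ =
        -(NormedSpace.exp (ts • A) * B * Bᵀ * NormedSpace.exp (ts • Aᵀ))
          + NormedSpace.exp (te • A) * B * Bᵀ * NormedSpace.exp (te • Aᵀ)
      ↔ X = ∫ t in ts..te, NormedSpace.exp (t • A) * B * Bᵀ * NormedSpace.exp (t • Aᵀ) := by
  intro X
  have hgramian := sylvesterMap_intervalIntegral_exp_smul_mul_mul_exp_smul A Aᵀ (B * Bᵀ) ts te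
  simp only [← Matrix.mul_assoc, sub_eq_neg_add] at hgramian
  have hinj : Function.Injective (sylvesterMap A Aᵀ) := sylvesterMap_injective (L := ℂ) <| by
    rw [← transpose_neg, transpose_map, spectrum_transpose]
    exact Set.disjoint_left.mpr hA
  rw [← hgramian, ← sylvesterMap_apply, hinj.eq_iff]

theorem time_limited_gramian_unique_solution {n m : ℕ}
    (A : Matrix (Fin n) (Fin n) ℝ) (B : Matrix (Fin n) (Fin m) ℝ)
    (hA : ∀ μ ∈ spectrum ℂ (A.map (algebraMap ℝ ℂ)),
            μ ∉ spectrum ℂ ((-A).map (algebraMap ℝ ℂ)))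
    (ts te : ℝ) (hts : 0 ≤ ts) (hte : ts < te) :
    ∀ X : Matrix (Fin n) (Fin n) ℝ,
      A * X + X * Aᵀ =
        -(NormedSpace.exp (ts • A) * B * Bᵀ * NormedSpace.exp (ts • Aᵀ))
          + NormedSpace.exp (te • A) * B * Bᵀ * NormedSpace.exp (te • Aᵀ)
      ↔ X = ∫ t in ts..te, NormedSpace.exp (t • A) * B * Bᵀ * NormedSpace.exp (t • Aᵀ) :=
  time_limited_gramian_unique_solution_general A B hA ts te
end

section
/- Let A ∈ ℂ^{n×n} be Hurwitz and diagonalizable with A = X Λ X⁻¹, Λ = diag(λ₁,…,λ_n), and B ∈ ℂ^n. Set w = X⁻¹B and X_B = X diag(w). Then the infinite Gramian P_∞ = ∫₀^∞ exp(At) B B^H exp(A^H t) dt equals X_B 𝒞 X_B^H, where 𝒞 is the Cauchy matrix with entries 𝒞_{ij} = −1/(λ_i + conj(λ_j)). -/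
/-!
Diagonalising, `exp (t A) B = X_B e(t)` with `e(t) = (exp (t λᵢ))ᵢ`, so the integrand is
`X_B (e(t) e(t)ᴴ) X_Bᴴ` and `e(t) e(t)ᴴ` has entries `exp ((λᵢ + conj λⱼ) t)`. By stability
`Re (λᵢ + conj λⱼ) < 0`, so each entry integrates over `(0, ∞)` to `-1 / (λᵢ + conj λⱼ)`,
and the constant factors `X_B`, `X_Bᴴ` come out of the integral by linearity.
-/

open Matrix MeasureTheory NormedSpace Set
open scoped Matrix ComplexConjugate

attribute [local instance] Matrix.normedAddCommGroup Matrix.normedSpace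

theorem Complex.re_add_conj_neg {a b : ℂ} (ha : a.re < 0) (hb : b.re < 0) :
    (a + conj b).re < 0 := by
  simpa using add_neg ha hb

theorem integral_exp_mul_complex_Ioi_zero {a : ℂ} (ha : a.re < 0) :
    ∫ t : ℝ in Ioi 0, Complex.exp (a * t) = -(1 / a) := by
  simpa [neg_div] using integral_exp_mul_complex_Ioi ha 0

namespace Matrix

section Integral

variable {α : Type*} [MeasurableSpace α] {μ : Measure α} {m n p q : Type*}
  [Fintype m] [Fintype n] [Fintype p] [Fintype q]

theorem integral_of {E : Type*} [NormedAddCommGroup E] [NormedSpace ℝ E] [CompleteSpace E]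
    {f : α → m → n → E} (hf : ∀ i j, Integrable (fun x => f x i j) μ) :
    ∫ x, of (f x) ∂μ = of fun i j => ∫ x, f x i j ∂μ := by
  ext i j
  rw [of_apply, ← eval_integral (fun j => hf i j),
    ← eval_integral (fun i => Integrable.of_eval fun j => hf i j)]
  rfl

/- Integrability is assumed entrywise: `Integrable F μ` for matrix-valued `F` does not elaborate
under the local norm instance, whose topology is not reducibly that of `Matrix`. -/
theorem integral_mul_mul {𝕜 : Type*} [RCLike 𝕜] (Y : Matrix m n 𝕜) (Z : Matrix p q 𝕜)
    {F : α → Matrix n p 𝕜} (hF : ∀ i j, Integrable (fun x => F x i j) μ) :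
    ∫ x, Y * F x * Z ∂μ = Y * (∫ x, F x ∂μ) * Z :=
  let L : Matrix n p 𝕜 →ₗ[𝕜] Matrix m q 𝕜 :=
    { toFun := fun G => Y * G * Z
      map_add' := fun G H => by simp only [Matrix.mul_add, Matrix.add_mul]
      map_smul' := fun c G => by simp only [Matrix.mul_smul, Matrix.smul_mul, RingHom.id_apply] }
  L.toContinuousLinearMap.integral_comp_comm
    (Integrable.of_eval fun i => Integrable.of_eval (hF i))

end Integral

section Exponential

variable {n : Type*} [Fintype n] [DecidableEq n]

theorem exp_conj_diagonal {X : Matrix n n ℂ} (hX : IsUnit X) (l : n → ℂ) :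
    exp (X * diagonal l * X⁻¹) = X * diagonal (fun i => Complex.exp (l i)) * X⁻¹ := by
  rw [exp_conj X _ hX, exp_diagonal, Complex.exp_eq_exp_ℂ, Pi.exp_def]

theorem exp_ofReal_smul_conjTranspose (A : Matrix n n ℂ) (t : ℝ) :
    exp ((t : ℂ) • Aᴴ) = (exp ((t : ℂ) • A))ᴴ := by
  rw [← exp_conjTranspose, conjTranspose_smul, Complex.star_def, Complex.conj_ofReal]

theorem exp_smul_conj_diagonal_mul {X : Matrix n n ℂ} (hX : IsUnit X) (l : n → ℂ)
    (B : Matrix n (Fin 1) ℂ) (s : ℂ) :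
    exp (s • (X * diagonal l * X⁻¹)) * B =
      X * diagonal (fun i => (X⁻¹ * B) i 0) * of (fun i _ => Complex.exp (s * l i)) := by
  have hsmul : s • (X * diagonal l * X⁻¹) = X * diagonal (fun i => s * l i) * X⁻¹ := by
    rw [show (fun i => s * l i) = s • l from rfl, diagonal_smul, Matrix.mul_smul,
      Matrix.smul_mul]
  rw [hsmul, exp_conj_diagonal hX, Matrix.mul_assoc, Matrix.mul_assoc, Matrix.mul_assoc]
  congr 1
  ext i j
  rw [Fin.fin_one_eq_zero j]
  simp only [diagonal_mul, of_apply, mul_comm]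

end Exponential

theorem of_exp_mul_conjTranspose {ι : Type*} (l : ι → ℂ) (t : ℝ) :
    of (fun i (_ : Fin 1) => Complex.exp (t * l i)) *
        (of fun i (_ : Fin 1) => Complex.exp (t * l i))ᴴ =
      of fun i j => Complex.exp ((l i + conj (l j)) * t) := by
  ext i j
  simp only [mul_apply, Fin.sum_univ_one, of_apply, conjTranspose_apply, Complex.star_def,
    ← Complex.exp_conj, map_mul, Complex.conj_ofReal, ← Complex.exp_add]
  ring_nf

theorem integral_exp_add_conj_mul_Ioi {ι : Type*} [Fintype ι] {l : ι → ℂ} (hl : ∀ i, (l i).re < 0) :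
    ∫ t : ℝ in Ioi 0, of (fun i j => Complex.exp ((l i + conj (l j)) * t)) =
      of fun i j => -(1 / (l i + conj (l j))) := by
  rw [integral_of fun i j =>
    integrableOn_exp_mul_complex_Ioi (Complex.re_add_conj_neg (hl i) (hl j)) 0]
  simp only [integral_exp_mul_complex_Ioi_zero (Complex.re_add_conj_neg (hl _) (hl _))]

end Matrix

theorem infinite_gramian_cauchy_factorization {n : ℕ}
    (A X : Matrix (Fin n) (Fin n) ℂ) (l : Fin n → ℂ)
    (B : Matrix (Fin n) (Fin 1) ℂ)
    (hX : IsUnit X) (hdiag : A = X * Matrix.diagonal l * X⁻¹)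
    (hHurwitz : ∀ i, (l i).re < 0) :
    (∫ t in Set.Ioi (0:ℝ), exp ((t:ℂ) • A) * B * Bᴴ * exp ((t:ℂ) • Aᴴ))
      = (X * Matrix.diagonal (fun i => (X⁻¹ * B) i 0)) *
          (Matrix.of fun i j => -(1 / (l i + conj (l j)))) *
          (X * Matrix.diagonal (fun i => (X⁻¹ * B) i 0))ᴴ := by
  set Y := X * diagonal fun i => (X⁻¹ * B) i 0
  have hintegrand (t : ℝ) : exp ((t:ℂ) • A) * B * Bᴴ * exp ((t:ℂ) • Aᴴ) =
      Y * of (fun i j => Complex.exp ((l i + conj (l j)) * t)) * Yᴴ := by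
    rw [exp_ofReal_smul_conjTranspose, Matrix.mul_assoc _ Bᴴ, ← conjTranspose_mul, hdiag,
      exp_smul_conj_diagonal_mul hX, conjTranspose_mul, ← of_exp_mul_conjTranspose]
    simp only [Y, Matrix.mul_assoc]
  have hentries (i j : Fin n) :
      IntegrableOn (fun t : ℝ => Complex.exp ((l i + conj (l j)) * t)) (Ioi 0) :=
    integrableOn_exp_mul_complex_Ioi (Complex.re_add_conj_neg (hHurwitz i) (hHurwitz j)) 0
  simp only [hintegrand]
  rw [integral_mul_mul (F := fun t : ℝ => of fun i j => Complex.exp ((l i + conj (l j)) * t))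
    _ _ hentries, integral_exp_add_conj_mul_Ioi hHurwitz]
end

section
/- For a Hurwitz matrix A and generalized system with nonsingular M, the time-limited generalized Gramian P_T (over [t_s,t_e]) of the system M ẋ = Ax + Bu, defined as P_T = ∫_{t_s}^{t_e} exp(M⁻¹A t) M⁻¹B Bᵀ M⁻ᵀ exp(Aᵀ M⁻ᵀ t) dt, satisfies the generalized Lyapunov equation A P_T Mᵀ + M P_T Aᵀ = −B_{t_s} B_{t_s}ᵀ + B_{t_e} B_{t_e}ᵀ with B_t = M exp(M⁻¹A t) M⁻¹ B = exp(A M⁻¹ t) B. -/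
open Matrix MeasureTheory NormedSpace
open scoped Matrix

attribute [local instance] Matrix.normedAddCommGroup Matrix.normedSpace

def IsHurwitz {n : ℕ} (A : Matrix (Fin n) (Fin n) ℝ) : Prop :=
  ∀ μ ∈ spectrum ℂ (A.map (algebraMap ℝ ℂ)), μ.re < 0

/-!
With `X = M⁻¹ A`, the integrand `F t = exp (t X) M⁻¹B (M⁻¹B)ᵀ exp (t Xᵀ)` solves `F' = X F + F Xᵀ`, so
integrating over `[ts, te]` gives the standard time-limited Lyapunov equation
`X P + P Xᵀ = F te - F ts`. Multiplying by `M` on the left and `Mᵀ` on the right turns `M X` into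
`A` and `M exp (t X) M⁻¹ B` into `B_t`.
-/

theorem hasDerivAt_exp_smul_mul_mul_exp_smul_s18 {𝕂 𝔸 : Type*} [RCLike 𝕂] [NormedRing 𝔸]
    [NormedAlgebra 𝕂 𝔸] [CompleteSpace 𝔸] (X C Y : 𝔸) (t : 𝕂) :
    HasDerivAt (fun s : 𝕂 => exp (s • X) * C * exp (s • Y))
      (X * (exp (t • X) * C * exp (t • Y)) + exp (t • X) * C * exp (t • Y) * Y) t := by
  refine (((hasDerivAt_exp_smul_const' X t).mul_const C).mul
    (hasDerivAt_exp_smul_const Y t)).congr_deriv ?_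
  simp only [mul_assoc]

theorem ContinuousLinearMap.map_intervalIntegral_eq_sub_of_hasDerivAt {E : Type*}
    [NormedAddCommGroup E] [NormedSpace ℝ E] [CompleteSpace E] {F : ℝ → E} (L : E →L[ℝ] E)
    (hF : ∀ t, HasDerivAt F (L (F t)) t) (a b : ℝ) :
    L (∫ t in a..b, F t) = F b - F a := by
  have hFc : Continuous F := continuous_iff_continuousAt.mpr fun t => (hF t).continuousAt
  rw [← L.intervalIntegral_comp_comm (hFc.intervalIntegrable a b)]
  exact intervalIntegral.integral_eq_sub_of_hasDerivAt (fun t _ => hF t)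
    ((L.continuous.comp hFc).intervalIntegrable a b)

namespace Matrix

variable {n m : Type*} [Fintype n] [DecidableEq n] [Fintype m]

theorem hasDerivAt_exp_smul_mul_mul_exp_smul_s18 (X C Y : Matrix n n ℝ) (t : ℝ) :
    HasDerivAt (fun s : ℝ => exp (s • X) * C * exp (s • Y))
      (X * (exp (t • X) * C * exp (t • Y)) + exp (t • X) * C * exp (t • Y) * Y) t := by
  -- The entrywise sup norm is not submultiplicative; the `L∞` operator norm is, and it induces
  -- the same topology, so the derivative computed there is the one stated.
  let : NormedAddCommGroup (Matrix n n ℝ) := Matrix.linftyOpNormedAddCommGroup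
  let : NormedRing (Matrix n n ℝ) := Matrix.linftyOpNormedRing
  let : NormedAlgebra ℝ (Matrix n n ℝ) := Matrix.linftyOpNormedAlgebra
  have : CompleteSpace (Matrix n n ℝ) := FiniteDimensional.complete ℝ _
  exact _root_.hasDerivAt_exp_smul_mul_mul_exp_smul_s18 X C Y t

noncomputable def timeLimitedGramian (X : Matrix n n ℝ) (B : Matrix n m ℝ) (ts te : ℝ) :
    Matrix n n ℝ :=
  ∫ t in ts..te, exp (t • X) * B * Bᵀ * exp (t • Xᵀ)

theorem timeLimitedGramian_lyapunov (X : Matrix n n ℝ) (B : Matrix n m ℝ) (ts te : ℝ) :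
    X * timeLimitedGramian X B ts te + timeLimitedGramian X B ts te * Xᵀ
      = exp (te • X) * B * (exp (te • X) * B)ᵀ - exp (ts • X) * B * (exp (ts • X) * B)ᵀ := by
  let lyapunovOp : Matrix n n ℝ →L[ℝ] Matrix n n ℝ :=
    LinearMap.toContinuousLinearMap (LinearMap.mulLeft ℝ X + LinearMap.mulRight ℝ Xᵀ)
  have h := lyapunovOp.map_intervalIntegral_eq_sub_of_hasDerivAt
    (F := fun t => exp (t • X) * (B * Bᵀ) * exp (t • Xᵀ))
    (fun t => hasDerivAt_exp_smul_mul_mul_exp_smul_s18 X (B * Bᵀ) Xᵀ t) ts te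
  simp only [← transpose_smul, exp_transpose, Matrix.mul_assoc] at h
  simp only [timeLimitedGramian, transpose_mul, ← transpose_smul, exp_transpose, Matrix.mul_assoc]
  exact h

end Matrix

theorem generalized_time_limited_gramian_lyapunov_general {n m : ℕ}
    (M A : Matrix (Fin n) (Fin n) ℝ) (B : Matrix (Fin n) (Fin m) ℝ)
    (hM : IsUnit M) (ts te : ℝ) :
    A * (∫ t in ts..te,
          NormedSpace.exp (t • (M⁻¹ * A)) * (M⁻¹ * B) * (M⁻¹ * B)ᵀ * NormedSpace.exp (t • (M⁻¹ * A)ᵀ)) * Mᵀ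
      + M * (∫ t in ts..te,
          NormedSpace.exp (t • (M⁻¹ * A)) * (M⁻¹ * B) * (M⁻¹ * B)ᵀ * NormedSpace.exp (t • (M⁻¹ * A)ᵀ)) * Aᵀ
      = -((M * NormedSpace.exp (ts • (M⁻¹ * A)) * M⁻¹ * B) * (M * NormedSpace.exp (ts • (M⁻¹ * A)) * M⁻¹ * B)ᵀ)
        + (M * NormedSpace.exp (te • (M⁻¹ * A)) * M⁻¹ * B) * (M * NormedSpace.exp (te • (M⁻¹ * A)) * M⁻¹ * B)ᵀ := by
  have hMX : M * (M⁻¹ * A) = A := mul_nonsing_inv_cancel_left M A ((isUnit_iff_isUnit_det M).mp hM)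
  change A * timeLimitedGramian (M⁻¹ * A) (M⁻¹ * B) ts te * Mᵀ
      + M * timeLimitedGramian (M⁻¹ * A) (M⁻¹ * B) ts te * Aᵀ = _
  set X := M⁻¹ * A
  set G := timeLimitedGramian X (M⁻¹ * B) ts te
  calc A * G * Mᵀ + M * G * Aᵀ = (M * X) * G * Mᵀ + M * G * (M * X)ᵀ := by rw [hMX]
    _ = M * (X * G + G * Xᵀ) * Mᵀ := by
        simp only [Matrix.mul_add, Matrix.add_mul, transpose_mul, Matrix.mul_assoc]
    _ = _ := by
        rw [timeLimitedGramian_lyapunov]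
        simp only [Matrix.mul_sub, Matrix.sub_mul, transpose_mul, Matrix.mul_assoc]
        abel

theorem generalized_time_limited_gramian_lyapunov {n m : ℕ}
    (M A : Matrix (Fin n) (Fin n) ℝ) (B : Matrix (Fin n) (Fin m) ℝ)
    (hM : IsUnit M) (hA : IsHurwitz (M⁻¹ * A))
    (ts te : ℝ) (hts : 0 ≤ ts) (hte : ts < te) :
    A * (∫ t in ts..te,
          NormedSpace.exp (t • (M⁻¹ * A)) * (M⁻¹ * B) * (M⁻¹ * B)ᵀ * NormedSpace.exp (t • (M⁻¹ * A)ᵀ)) * Mᵀ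
      + M * (∫ t in ts..te,
          NormedSpace.exp (t • (M⁻¹ * A)) * (M⁻¹ * B) * (M⁻¹ * B)ᵀ * NormedSpace.exp (t • (M⁻¹ * A)ᵀ)) * Aᵀ
      = -((M * NormedSpace.exp (ts • (M⁻¹ * A)) * M⁻¹ * B) * (M * NormedSpace.exp (ts • (M⁻¹ * A)) * M⁻¹ * B)ᵀ)
        + (M * NormedSpace.exp (te • (M⁻¹ * A)) * M⁻¹ * B) * (M * NormedSpace.exp (te • (M⁻¹ * A)) * M⁻¹ * B)ᵀ :=
  generalized_time_limited_gramian_lyapunov_general M A B hM ts te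
end
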